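/- Fix a real E-by-V matrix d, a diagonal V-by-V matrix ★₀, a diagonal E-by-E matrix ★₁, and a vertex v ∈ V. For t ∈ ℝ let ★₀(t) = ★₀ + t Eᵥᵥ, where Eᵥᵥ is the diagonal matrix with a single 1 in entry (v, v). Suppose x(t) ∈ ℝ^V and λ(t) ∈ ℝ are differentiable at 0 and satisfy dᵀ★₁d x(t) = λ(t) ★₀(t) x(t) and x(t)ᵀ★₀(t)x(t) = 1 for all t near 0. Then λ'(0) = −λ(0) (xᵥ(0))². -/

import Mathlib

/-!
Pairing the eigen-equation with `x(t)` and using the normalization gives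
`λ(t) = x(t)ᵀ A x(t)` with `A = dᵀ★₁d` symmetric, so `λ'(0) = 2 x'ᵀ A x(0) = 2 λ(0) x'ᵀ ★₀ x(0)`
by the eigen-equation at `0`. Differentiating the normalization `x(t)ᵀ (★₀ + t Eᵥᵥ) x(t) = 1`
gives `2 x'ᵀ ★₀ x(0) + x(0)ᵥ² = 0`.
-/

open Matrix Filter Topology

theorem Matrix.IsSymm.dotProduct_mulVec_comm {α V : Type*} [CommSemiring α] [Fintype V]
    {M : Matrix V V α} (hM : M.IsSymm) (x y : V → α) :
    x ⬝ᵥ (M *ᵥ y) = y ⬝ᵥ (M *ᵥ x) := by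
  rw [dotProduct_mulVec, ← mulVec_transpose, hM.eq, dotProduct_comm]

theorem Matrix.isSymm_transpose_mul_diagonal_mul {α E V : Type*} [CommSemiring α] [Fintype E]
    [DecidableEq E] (d : Matrix E V α) (s : E → α) : (dᵀ * diagonal s * d).IsSymm := by
  simp [IsSymm, transpose_mul, Matrix.mul_assoc]

theorem Matrix.dotProduct_single_one_mulVec_self {α V : Type*} [Semiring α] [Fintype V]
    [DecidableEq V] (x : V → α) (v : V) : x ⬝ᵥ (single v v 1 *ᵥ x) = x v ^ 2 := by
  simp [single_mulVec, sq, dotProduct, Function.update_apply]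

section

variable {𝕜 V : Type*} [NontriviallyNormedField 𝕜] [Fintype V]

theorem HasDerivAt.dotProduct {x y : 𝕜 → V → 𝕜} {x' y' : V → 𝕜} {t : 𝕜}
    (hx : HasDerivAt x x' t) (hy : HasDerivAt y y' t) :
    HasDerivAt (fun s => x s ⬝ᵥ y s) (x' ⬝ᵥ y t + x t ⬝ᵥ y') t := by
  simp only [_root_.dotProduct, ← Finset.sum_add_distrib]
  exact HasDerivAt.fun_sum fun i _ => (hasDerivAt_pi.mp hx i).fun_mul (hasDerivAt_pi.mp hy i)

theorem HasDerivAt.mulVec {W : Type*} (M : Matrix W V 𝕜) {x : 𝕜 → V → 𝕜} {x' : V → 𝕜}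
    {t : 𝕜} (hx : HasDerivAt x x' t) : HasDerivAt (fun s => M *ᵥ x s) (M *ᵥ x') t :=
  hasDerivAt_pi.2 fun i => ((hasDerivAt_const t (M i)).dotProduct hx).congr_deriv <| by
    rw [zero_dotProduct, zero_add]; rfl

theorem HasDerivAt.dotProduct_mulVec_self {M : Matrix V V 𝕜} (hM : M.IsSymm)
    {x : 𝕜 → V → 𝕜} {x' : V → 𝕜} {t : 𝕜} (hx : HasDerivAt x x' t) :
    HasDerivAt (fun s => x s ⬝ᵥ (M *ᵥ x s)) (2 * (x' ⬝ᵥ (M *ᵥ x t))) t :=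
  (hx.dotProduct (hx.mulVec M)).congr_deriv (by rw [hM.dotProduct_mulVec_comm (x t)]; ring)

theorem HasDerivAt.dotProduct_add_smul_mulVec_self {B N : Matrix V V 𝕜} (hB : B.IsSymm)
    {x : 𝕜 → V → 𝕜} {x' : V → 𝕜} (hx : HasDerivAt x x' 0) :
    HasDerivAt (fun t => x t ⬝ᵥ ((B + t • N) *ᵥ x t))
      (2 * (x' ⬝ᵥ (B *ᵥ x 0)) + x 0 ⬝ᵥ (N *ᵥ x 0)) 0 := by
  have hsplit : (fun t => x t ⬝ᵥ ((B + t • N) *ᵥ x t))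
      = fun t => x t ⬝ᵥ (B *ᵥ x t) + t * (x t ⬝ᵥ (N *ᵥ x t)) := by
    funext t
    rw [add_mulVec, dotProduct_add, smul_mulVec, dotProduct_smul, smul_eq_mul]
  rw [hsplit]
  exact ((hx.dotProduct_mulVec_self hB).fun_add
    ((hasDerivAt_id' 0).fun_mul (hx.dotProduct (hx.mulVec N)))).congr_deriv (by simp)

def IsNormalizedEigenpair (A B : Matrix V V 𝕜) (x : V → 𝕜) (μ : 𝕜) : Prop :=
  A *ᵥ x = μ • (B *ᵥ x) ∧ x ⬝ᵥ (B *ᵥ x) = 1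

theorem IsNormalizedEigenpair.eigenvalue_eq {A B : Matrix V V 𝕜} {x : V → 𝕜} {μ : 𝕜}
    (h : IsNormalizedEigenpair A B x μ) : μ = x ⬝ᵥ (A *ᵥ x) := by
  rw [h.1, dotProduct_smul, h.2, smul_eq_mul, mul_one]

theorem IsNormalizedEigenpair.eigenvalue_deriv_of_perturbation {A B N : Matrix V V 𝕜}
    (hA : A.IsSymm) (hB : B.IsSymm) {x : 𝕜 → V → 𝕜} {μ : 𝕜 → 𝕜} {x' : V → 𝕜} {μ' : 𝕜}
    (hx : HasDerivAt x x' 0) (hμ : HasDerivAt μ μ' 0)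
    (heig : ∀ᶠ t in 𝓝 0, IsNormalizedEigenpair A (B + t • N) (x t) (μ t)) :
    μ' = -μ 0 * (x 0 ⬝ᵥ (N *ᵥ x 0)) := by
  have hμ_eq : (fun t => x t ⬝ᵥ (A *ᵥ x t)) =ᶠ[𝓝 0] μ :=
    heig.mono fun t ht => ht.eigenvalue_eq.symm
  have hμ' : μ' = 2 * (x' ⬝ᵥ (A *ᵥ x 0)) :=
    hμ.unique ((hx.dotProduct_mulVec_self hA).congr_of_eventuallyEq hμ_eq.symm)
  have hA_eig : A *ᵥ x 0 = μ 0 • (B *ᵥ x 0) := by simpa using heig.self_of_nhds.1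
  have hnorm_eq : (fun t => x t ⬝ᵥ ((B + t • N) *ᵥ x t)) =ᶠ[𝓝 0] fun _ => 1 :=
    heig.mono fun t ht => ht.2
  have hnorm' : 2 * (x' ⬝ᵥ (B *ᵥ x 0)) + x 0 ⬝ᵥ (N *ᵥ x 0) = 0 :=
    (hx.dotProduct_add_smul_mulVec_self hB).unique
      ((hasDerivAt_const 0 1).congr_of_eventuallyEq hnorm_eq)
  rw [hμ', hA_eig, dotProduct_smul, smul_eq_mul]
  linear_combination μ 0 * hnorm'

end

/-- Derivative of a generalized eigenvalue of the pencil `(dᵀ★₁d, ★₀(t))` under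
perturbation `★₀(t) = ★₀ + t Eᵥᵥ` of a single diagonal entry: with the normalization
`x(t)ᵀ★₀(t)x(t) = 1`, we have `λ'(0) = −λ(0) (xᵥ(0))²`. -/
theorem stmt_9 {E V : Type*} [Fintype E] [Fintype V] [DecidableEq E] [DecidableEq V]
    (d : Matrix E V ℝ) (s0 : V → ℝ) (s1 : E → ℝ) (v : V)
    (x : ℝ → V → ℝ) (lam : ℝ → ℝ) (x' : V → ℝ) (lam' : ℝ)
    (hx : HasDerivAt x x' 0) (hlam : HasDerivAt lam lam' 0)
    (heig : ∀ᶠ t in 𝓝 (0 : ℝ),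
      (dᵀ * Matrix.diagonal s1 * d) *ᵥ x t
        = lam t • ((Matrix.diagonal s0 + t • Matrix.single v v 1) *ᵥ x t))
    (hnorm : ∀ᶠ t in 𝓝 (0 : ℝ),
      x t ⬝ᵥ ((Matrix.diagonal s0 + t • Matrix.single v v 1) *ᵥ x t) = 1) :
    lam' = -lam 0 * (x 0 v) ^ 2 := by
  rw [← dotProduct_single_one_mulVec_self]
  exact IsNormalizedEigenpair.eigenvalue_deriv_of_perturbation
    (isSymm_transpose_mul_diagonal_mul d s1) (isSymm_diagonal s0) hx hlam (heig.and hnorm)
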